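/- arXiv:1605.07411 — 2 statements merged into one kernel-verified Lean document; each statement's English description precedes it below -/
import Mathlib

section
/- Let D be an oriented graph with no induced TT3 and no induced P⁺(2,1). Every induced cycle of odd length at least 5 in D is a directed cycle. -/
/-! Along an induced path `a b c d`, P⁺(2,1)-freeness forces the arcs `ab` and `cd` to point the
same way, since otherwise `a → b → c ← d` or `d → c → b ← a` is an induced P⁺(2,1). On an induced
cycle of length at least 5 every four consecutive vertices form such a path, so the orientation of
the edge `v i v (i+1)` is invariant under `i ↦ i + 2`; since `n` is odd, `2` generates `ZMod n`,
and all edges are oriented alike. -/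

/-- The underlying simple graph of a digraph given by its arc relation. -/
def underlying {V : Type*} (A : V → V → Prop) : SimpleGraph V where
  Adj x y := x ≠ y ∧ (A x y ∨ A y x)
  symm := ⟨by intro x y h; exact ⟨h.1.symm, h.2.symm⟩⟩
  loopless := ⟨by intro x h; exact h.1 rfl⟩

def P21Free {V : Type*} (A : V → V → Prop) : Prop :=
  ¬ ∃ a b c d : V, A a b ∧ A b c ∧ A d c ∧
    ¬ (underlying A).Adj a c ∧ ¬ (underlying A).Adj a d ∧ ¬ (underlying A).Adj b d

theorem P21Free.arc_of_inducedPath {V : Type*} {A : V → V → Prop} (hA : P21Free A)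
    {a b c d : V} (hab : A a b) (hbc : (underlying A).Adj b c) (hcd : (underlying A).Adj c d)
    (hac : ¬ (underlying A).Adj a c) (had : ¬ (underlying A).Adj a d)
    (hbd : ¬ (underlying A).Adj b d) : A c d := by
  by_contra hcd'
  have hdc : A d c := hcd.2.resolve_left hcd'
  rcases hbc.2 with hbc | hcb
  · exact hA ⟨a, b, c, d, hab, hbc, hdc, hac, had, hbd⟩
  · exact hA ⟨d, c, b, a, hdc, hcb, hab, fun h => hbd h.symm, fun h => had h.symm,
      fun h => hac h.symm⟩

theorem ZMod.natCast_ne_zero_of_pos_of_lt {n k : ℕ} (hk : 0 < k) (hkn : k < n) :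
    (k : ZMod n) ≠ 0 := by
  rw [Ne, ZMod.natCast_eq_zero_iff]
  exact fun h => absurd (Nat.le_of_dvd hk h) (by omega)

theorem ZMod.forall_of_add_two {n : ℕ} (hn : Odd n) {P : ZMod n → Prop}
    (hP : ∀ i, P i → P (i + 2)) {i : ZMod n} (hi : P i) (j : ZMod n) : P j := by
  obtain ⟨t, rfl⟩ := hn
  have hiter : ∀ k : ℕ, P (i + 2 * k) := by
    intro k
    induction k with
    | zero => simpa using hi
    | succ k ih => simpa [mul_add, add_assoc] using hP _ ih
  obtain ⟨m, hm⟩ := ZMod.natCast_zmod_surjective (j - i)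
  -- `2 * (t + 1) = n + 1 = 1` in `ZMod n`
  have hn0 : ((2 * t + 1 : ℕ) : ZMod (2 * t + 1)) = 0 := ZMod.natCast_self _
  convert hiter ((t + 1) * m) using 1
  push_cast at hn0 ⊢
  linear_combination -hm - m * hn0

section InducedCycle

variable {V : Type*} {G : SimpleGraph V} {n : ℕ} {v : ZMod n → V}

theorem not_adj_add_of_induced
    (hind : ∀ i j : ZMod n, j ≠ i + 1 → i ≠ j + 1 → i ≠ j → ¬ G.Adj (v i) (v j))
    {k : ℕ} (hk : 2 ≤ k) (hkn : k + 2 ≤ n) (i : ZMod n) : ¬ G.Adj (v i) (v (i + k)) := by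
  have hk1 := ZMod.natCast_ne_zero_of_pos_of_lt (n := n) (k := k - 1) (by omega) (by omega)
  have hk0 := ZMod.natCast_ne_zero_of_pos_of_lt (n := n) (k := k) (by omega) (by omega)
  have hk2 := ZMod.natCast_ne_zero_of_pos_of_lt (n := n) (k := k + 1) (by omega) (by omega)
  push_cast [Nat.cast_sub (by omega : 1 ≤ k)] at hk1 hk2
  refine hind i (i + k) (fun h => hk1 ?_) (fun h => hk2 ?_) (fun h => hk0 ?_)
  · linear_combination h
  · linear_combination -h
  · linear_combination -h

theorem arc_add_two_of_induced {A : V → V → Prop} (hA : P21Free A)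
    (hn : 5 ≤ n) (hcyc : ∀ i : ZMod n, (underlying A).Adj (v i) (v (i + 1)))
    (hind : ∀ i j : ZMod n, j ≠ i + 1 → i ≠ j + 1 → i ≠ j →
      ¬ (underlying A).Adj (v i) (v j))
    (i : ZMod n) (hi : A (v i) (v (i + 1))) : A (v (i + 2)) (v (i + 2 + 1)) := by
  have hnonadj (k : ℕ) (hk : 2 ≤ k) (hkn : k + 2 ≤ n) (j : ZMod n) :=
    not_adj_add_of_induced hind hk hkn j
  refine hA.arc_of_inducedPath hi ?_ (hcyc _) ?_ ?_ ?_
  · simpa [add_assoc, one_add_one_eq_two] using hcyc (i + 1)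
  · simpa using hnonadj 2 le_rfl (by omega) i
  · convert hnonadj 3 (by omega) (by omega) i using 3
    push_cast; ring
  · convert hnonadj 2 le_rfl (by omega) (i + 1) using 3
    push_cast; ring

end InducedCycle

theorem stmt12_general {V : Type*} (A : V → V → Prop)
    (hP21 : ¬ ∃ a b c d : V, A a b ∧ A b c ∧ A d c ∧
      ¬ (underlying A).Adj a c ∧ ¬ (underlying A).Adj a d ∧
      ¬ (underlying A).Adj b d)
    (n : ℕ) (hn5 : 5 ≤ n) (hodd : Odd n) (v : ZMod n → V)
    (hcyc : ∀ i : ZMod n, (underlying A).Adj (v i) (v (i + 1)))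
    (hind : ∀ i j : ZMod n, j ≠ i + 1 → i ≠ j + 1 → i ≠ j →
      ¬ (underlying A).Adj (v i) (v j)) :
    (∀ i : ZMod n, A (v i) (v (i + 1))) ∨
    (∀ i : ZMod n, A (v (i + 1)) (v i)) := by
  have forward_of_forward {i : ZMod n} (hi : A (v i) (v (i + 1))) (j : ZMod n) :
      A (v j) (v (j + 1)) :=
    ZMod.forall_of_add_two hodd (arc_add_two_of_induced hP21 hn5 hcyc hind) hi j
  by_cases h0 : A (v 0) (v (0 + 1))
  · exact Or.inl (forward_of_forward h0)
  · exact Or.inr fun i => (hcyc i).2.resolve_left fun hi => h0 (forward_of_forward hi 0)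

theorem stmt12 {V : Type*} [Fintype V] (A : V → V → Prop)
    (hasym : ∀ x y, A x y → ¬ A y x)
    (hTT3 : ¬ ∃ u v w : V, A u v ∧ A v w ∧ A u w)
    (hP21 : ¬ ∃ a b c d : V, A a b ∧ A b c ∧ A d c ∧
      ¬ (underlying A).Adj a c ∧ ¬ (underlying A).Adj a d ∧
      ¬ (underlying A).Adj b d)
    (n : ℕ) (hn5 : 5 ≤ n) (hodd : Odd n) (v : ZMod n → V)
    (hinj : Function.Injective v)
    (hcyc : ∀ i : ZMod n, (underlying A).Adj (v i) (v (i + 1)))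
    (hind : ∀ i j : ZMod n, j ≠ i + 1 → i ≠ j + 1 → i ≠ j →
      ¬ (underlying A).Adj (v i) (v j)) :
    (∀ i : ZMod n, A (v i) (v (i + 1))) ∨
    (∀ i : ZMod n, A (v (i + 1)) (v i)) :=
  stmt12_general A hP21 n hn5 hodd v hcyc hind
end

section
/- An oriented graph with no induced P⁺(3) and no induced P⁺(2,1) contains no odd hole (no induced cycle of odd length at least 5 in its underlying graph). -/
theorem ZMod.natCast_ne_natCast_of_lt {n a b : ℕ} (ha : a < n) (hb : b < n) (hab : a ≠ b) :
    (a : ZMod n) ≠ b := by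
  rwa [Ne, ZMod.natCast_eq_natCast_iff' a b n, Nat.mod_eq_of_lt ha, Nat.mod_eq_of_lt hb]

theorem ZMod.exists_iff_succ_of_odd {n : ℕ} (hn : Odd n) (P : ZMod n → Prop) :
    ∃ i, P i ↔ P (i + 1) := by
  by_contra! h
  have parity : ∀ k : ℕ, P k ↔ (P 0 ↔ Even k) := by
    intro k
    induction k with
    | zero => simp
    | succ k ih =>
      rw [Nat.cast_succ, Nat.even_add_one]
      have := h k
      tauto
  have h0 := parity n
  rw [ZMod.natCast_self] at h0
  have := Nat.not_even_iff_odd.mpr hn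
  tauto

theorem SimpleGraph.not_adj_of_chordless_cycle {V : Type*} {G : SimpleGraph V} {n : ℕ}
    {v : ZMod n → V}
    (hchordless : ∀ i j : ZMod n, j ≠ i + 1 → i ≠ j + 1 → i ≠ j → ¬ G.Adj (v i) (v j))
    {i j : ZMod n} {k : ℕ} (hk : 2 ≤ k) (hkn : k + 2 ≤ n) (hij : i + k = j) :
    ¬ G.Adj (v i) (v j) := by
  subst hij
  refine hchordless i (i + k) (fun h => ?_) (fun h => ?_) (fun h => ?_)
  · have h : (k : ZMod n) = (1 : ℕ) := by simpa using h
    exact ZMod.natCast_ne_natCast_of_lt (by omega) (by omega) (by omega) h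
  · have h : ((k + 1 : ℕ) : ZMod n) = (0 : ℕ) := by push_cast; linear_combination -h
    exact ZMod.natCast_ne_natCast_of_lt (by omega) (by omega) (by omega) h
  · have h : (k : ZMod n) = (0 : ℕ) := by push_cast; linear_combination -h
    exact ZMod.natCast_ne_natCast_of_lt (by omega) (by omega) (by omega) h

section

variable {V : Type*} {A : V → V → Prop}
  (hP3 : ¬ ∃ a b c d : V, A a b ∧ A b c ∧ A c d ∧
    ¬ (underlying A).Adj a c ∧ ¬ (underlying A).Adj a d ∧ ¬ (underlying A).Adj b d)
  (hP21 : ¬ ∃ a b c d : V, A a b ∧ A b c ∧ A d c ∧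
    ¬ (underlying A).Adj a c ∧ ¬ (underlying A).Adj a d ∧ ¬ (underlying A).Adj b d)
include hP3 hP21

theorem not_adj_of_induced_dipath {a b c d : V} (hab : A a b) (hbc : A b c)
    (hac : ¬ (underlying A).Adj a c) (had : ¬ (underlying A).Adj a d)
    (hbd : ¬ (underlying A).Adj b d) : ¬ (underlying A).Adj c d := by
  rintro ⟨-, hcd | hdc⟩
  · exact hP3 ⟨a, b, c, d, hab, hbc, hcd, hac, had, hbd⟩
  · exact hP21 ⟨a, b, c, d, hab, hbc, hdc, hac, had, hbd⟩

theorem not_iff_orientation_succ_of_hole {n : ℕ} (hn : 5 ≤ n) {v : ZMod n → V}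
    (hcycle : ∀ i : ZMod n, (underlying A).Adj (v i) (v (i + 1)))
    (hchordless : ∀ i j : ZMod n, j ≠ i + 1 → i ≠ j + 1 → i ≠ j →
      ¬ (underlying A).Adj (v i) (v j)) (i : ZMod n) :
    ¬ (A (v i) (v (i + 1)) ↔ A (v (i + 1)) (v (i + 1 + 1))) := by
  have not_adj (j l : ZMod n) (k : ℕ) (hk : 2 ≤ k ∧ k ≤ 3) (hjl : j + k = l) :=
    SimpleGraph.not_adj_of_chordless_cycle (k := k) hchordless hk.1 (by omega) hjl
  have backward_arc (j : ZMod n) (h : ¬ A (v j) (v (j + 1))) : A (v (j + 1)) (v j) :=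
    (hcycle j).2.resolve_left h
  intro hiff
  by_cases hforward : A (v i) (v (i + 1))
  · exact not_adj_of_induced_dipath hP3 hP21 hforward (hiff.mp hforward)
      (not_adj i (i + 1 + 1) 2 (by norm_num) (by push_cast; ring))
      (not_adj i (i + 1 + 1 + 1) 3 (by norm_num) (by push_cast; ring))
      (not_adj (i + 1) (i + 1 + 1 + 1) 2 (by norm_num) (by push_cast; ring)) (hcycle (i + 1 + 1))
  · have hbefore : (underlying A).Adj (v i) (v (i - 1)) := by
      simpa using (hcycle (i - 1)).symm
    exact not_adj_of_induced_dipath hP3 hP21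
      (backward_arc (i + 1) (mt hiff.mpr hforward)) (backward_arc i hforward)
      (mt .symm (not_adj i (i + 1 + 1) 2 (by norm_num) (by push_cast; ring)))
      (mt .symm (not_adj (i - 1) (i + 1 + 1) 3 (by norm_num) (by push_cast; ring)))
      (mt .symm (not_adj (i - 1) (i + 1) 2 (by norm_num) (by push_cast; ring))) hbefore

end

theorem stmt17_general {V : Type*} (A : V → V → Prop)
    (hP3 : ¬ ∃ a b c d : V, A a b ∧ A b c ∧ A c d ∧
      ¬ (underlying A).Adj a c ∧ ¬ (underlying A).Adj a d ∧
      ¬ (underlying A).Adj b d)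
    (hP21 : ¬ ∃ a b c d : V, A a b ∧ A b c ∧ A d c ∧
      ¬ (underlying A).Adj a c ∧ ¬ (underlying A).Adj a d ∧
      ¬ (underlying A).Adj b d) :
    ¬ ∃ (n : ℕ) (v : ZMod n → V), 5 ≤ n ∧ Odd n ∧
      Function.Injective v ∧
      (∀ i : ZMod n, (underlying A).Adj (v i) (v (i + 1))) ∧
      (∀ i j : ZMod n, j ≠ i + 1 → i ≠ j + 1 → i ≠ j →
        ¬ (underlying A).Adj (v i) (v j)) := by
  rintro ⟨n, v, hn, hodd, -, hcycle, hchordless⟩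
  obtain ⟨i, hi⟩ := ZMod.exists_iff_succ_of_odd hodd fun i => A (v i) (v (i + 1))
  exact not_iff_orientation_succ_of_hole hP3 hP21 hn hcycle hchordless i hi

theorem stmt17 {V : Type*} [Fintype V] (A : V → V → Prop)
    (hasym : ∀ x y, A x y → ¬ A y x)
    (hP3 : ¬ ∃ a b c d : V, A a b ∧ A b c ∧ A c d ∧
      ¬ (underlying A).Adj a c ∧ ¬ (underlying A).Adj a d ∧
      ¬ (underlying A).Adj b d)
    (hP21 : ¬ ∃ a b c d : V, A a b ∧ A b c ∧ A d c ∧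
      ¬ (underlying A).Adj a c ∧ ¬ (underlying A).Adj a d ∧
      ¬ (underlying A).Adj b d) :
    ¬ ∃ (n : ℕ) (v : ZMod n → V), 5 ≤ n ∧ Odd n ∧
      Function.Injective v ∧
      (∀ i : ZMod n, (underlying A).Adj (v i) (v (i + 1))) ∧
      (∀ i j : ZMod n, j ≠ i + 1 → i ≠ j + 1 → i ≠ j →
        ¬ (underlying A).Adj (v i) (v j)) :=
  stmt17_general A hP3 hP21
end
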